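/- arXiv:1703.10233 — 2 statements merged into one kernel-verified Lean document; each statement's English description precedes it below -/
import Mathlib

section
/- For every H ∈ (0,1], every n ∈ ℕ, all times t_1,…,t_n ∈ [0,∞) and all real coefficients c_1,…,c_n, one has Σ_{i=1}^n Σ_{j=1}^n c_i c_j · ½(t_i^{2H} + t_j^{2H} − |t_i − t_j|^{2H}) ≥ 0; that is, the fractional Brownian motion covariance kernel cov_H is positive semidefinite on [0,∞) × [0,∞). -/
/-!
For `0 < α < 2` the integral `C_α = ∫₀^∞ (1 - cos u) u^(-1-α) du` is finite and positive, and
scaling gives `|a|^α · C_α = ∫₀^∞ (1 - cos (a u)) u^(-1-α) du`. Hence `|s|^α + |t|^α - |s-t|^α`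
is a positive mixture over `u > 0` of the kernels `(1 - cos su) + (1 - cos tu) - (1 - cos (s-t)u)`,
whose quadratic forms equal `(∑ cᵢ (1 - cos tᵢu))² + (∑ cᵢ sin tᵢu)² ≥ 0`.
For `α = 2` the quadratic form is `2 (∑ cᵢ tᵢ)²`.
-/

open MeasureTheory Real Set

lemma integrableOn_one_sub_cos_mul_rpow {α : ℝ} (hα : 0 < α) (hα2 : α < 2) (a : ℝ) :
    IntegrableOn (fun u ↦ (1 - cos (a * u)) * u ^ (-1 - α)) (Ioi 0) := by
  have hmeas : AEStronglyMeasurable (fun u : ℝ ↦ (1 - cos (a * u)) * u ^ (-1 - α)) := by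
    fun_prop
  have hnorm : ∀ u : ℝ, 0 < u →
      ‖(1 - cos (a * u)) * u ^ (-1 - α)‖ = (1 - cos (a * u)) * u ^ (-1 - α) := fun u hu ↦
    norm_of_nonneg (mul_nonneg (by linarith [cos_le_one (a * u)]) (rpow_nonneg hu.le _))
  rw [← Ioc_union_Ioi_eq_Ioi zero_le_one]
  refine IntegrableOn.union ?_ ?_
  · refine (((intervalIntegral.intervalIntegrable_rpow' (r := 1 - α) (by linarith)).1).const_mul
      (a ^ 2 / 2)).mono' hmeas.restrict ?_
    filter_upwards [ae_restrict_mem measurableSet_Ioc] with u hu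
    have hcos : 1 - cos (a * u) ≤ a ^ 2 / 2 * u ^ 2 := by
      nlinarith [one_sub_sq_div_two_le_cos (x := a * u)]
    have hpow : u ^ (1 - α) = u ^ 2 * u ^ (-1 - α) := by
      rw [← rpow_two, ← rpow_add hu.1]; ring_nf
    rw [hnorm u hu.1, hpow, ← mul_assoc]
    exact mul_le_mul_of_nonneg_right hcos (rpow_nonneg hu.1.le _)
  · refine ((integrableOn_Ioi_rpow_of_lt (a := -1 - α) (by linarith) one_pos).const_mul 2).mono'
      hmeas.restrict ?_
    filter_upwards [ae_restrict_mem measurableSet_Ioi] with u hu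
    rw [hnorm u (one_pos.trans hu)]
    exact mul_le_mul_of_nonneg_right (by linarith [neg_one_le_cos (a * u)])
      (rpow_nonneg (one_pos.trans hu).le _)

lemma integral_one_sub_cos_mul_rpow {α : ℝ} (hα : 0 < α) (a : ℝ) :
    ∫ u in Ioi 0, (1 - cos (a * u)) * u ^ (-1 - α) =
      |a| ^ α * ∫ u in Ioi 0, (1 - cos u) * u ^ (-1 - α) := by
  rcases (abs_nonneg a).eq_or_lt with ha | ha
  · simp [abs_eq_zero.mp ha.symm, zero_rpow hα.ne']
  have hscale : ∀ u ∈ Ioi (0 : ℝ), (1 - cos (a * u)) * u ^ (-1 - α) =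
      |a| ^ (1 + α) * ((1 - cos (|a| * u)) * (|a| * u) ^ (-1 - α)) := fun u hu ↦ by
    have hcancel : |a| ^ (1 + α) * |a| ^ (-1 - α) = 1 := by rw [← rpow_add ha]; norm_num
    rw [mul_rpow ha.le (le_of_lt hu), ← cos_abs (a * u), abs_mul, abs_of_pos (show 0 < u from hu)]
    linear_combination -((1 - cos (|a| * u)) * u ^ (-1 - α)) * hcancel
  rw [setIntegral_congr_fun measurableSet_Ioi hscale, integral_const_mul,
    integral_comp_mul_left_Ioi (fun u ↦ (1 - cos u) * u ^ (-1 - α)) 0 ha, mul_zero, smul_eq_mul,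
    ← mul_assoc, rpow_add ha, rpow_one]
  field_simp

lemma integral_one_sub_cos_mul_rpow_pos {α : ℝ} (hα : 0 < α) (hα2 : α < 2) :
    0 < ∫ u in Ioi 0, (1 - cos u) * u ^ (-1 - α) := by
  have hint := integrableOn_one_sub_cos_mul_rpow hα hα2 1
  simp only [one_mul] at hint
  rw [setIntegral_pos_iff_support_of_nonneg_ae _ hint]
  · have hsupp : Ioo 0 (2 * π) ⊆ Function.support (fun u ↦ (1 - cos u) * u ^ (-1 - α)) ∩ Ioi 0 :=
      fun u ⟨hu0, hu⟩ ↦ ⟨mul_ne_zero (sub_ne_zero.mpr fun h ↦ hu0.ne'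
        ((cos_eq_one_iff_of_lt_of_lt (by linarith [pi_pos]) hu).mp h.symm))
        (rpow_pos_of_pos hu0 _).ne', hu0⟩
    exact (measure_mono hsupp).trans_lt' (by simp [pi_pos])
  · filter_upwards [ae_restrict_mem measurableSet_Ioi] with u hu
    exact mul_nonneg (by linarith [cos_le_one u]) (rpow_nonneg (le_of_lt hu) _)

lemma sum_sum_mul_integral_nonneg {X ι : Type*} [MeasurableSpace X] {μ : Measure X} [Fintype ι]
    {k : ι → ι → X → ℝ} (hk : ∀ i j, Integrable (k i j) μ) (c : ι → ℝ)
    (hpos : ∀ᵐ x ∂μ, 0 ≤ ∑ i, ∑ j, c i * c j * k i j x) :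
    0 ≤ ∑ i, ∑ j, c i * c j * ∫ x, k i j x ∂μ := by
  have hswap : ∑ i, ∑ j, c i * c j * ∫ x, k i j x ∂μ = ∫ x, ∑ i, ∑ j, c i * c j * k i j x ∂μ := by
    rw [integral_finsetSum _ fun i _ ↦ integrable_finsetSum _ fun j _ ↦ (hk i j).const_mul _]
    refine Finset.sum_congr rfl fun i _ ↦ ?_
    rw [integral_finsetSum _ fun j _ ↦ (hk i j).const_mul _]
    simp_rw [integral_const_mul]
  exact hswap ▸ integral_nonneg_of_ae hpos

lemma sum_sum_mul_one_sub_cos_nonneg {ι : Type*} [Fintype ι] (s c : ι → ℝ) :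
    0 ≤ ∑ i, ∑ j, c i * c j * ((1 - cos (s i)) + (1 - cos (s j)) - (1 - cos (s i - s j))) := by
  have hsq : ∑ i, ∑ j, c i * c j * ((1 - cos (s i)) + (1 - cos (s j)) - (1 - cos (s i - s j))) =
      (∑ i, c i * (1 - cos (s i))) ^ 2 + (∑ i, c i * sin (s i)) ^ 2 := by
    simp_rw [sq, Finset.sum_mul_sum, ← Finset.sum_add_distrib, cos_sub]
    exact Finset.sum_congr rfl fun i _ ↦ Finset.sum_congr rfl fun j _ ↦ by ring
  rw [hsq]
  positivity

lemma sum_sum_mul_abs_rpow_kernel_nonneg_of_lt_two {ι : Type*} [Fintype ι] {α : ℝ} (hα : 0 < α)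
    (hα2 : α < 2) (t c : ι → ℝ) :
    0 ≤ ∑ i, ∑ j, c i * c j * (|t i| ^ α + |t j| ^ α - |t i - t j| ^ α) := by
  set f : ℝ → ℝ → ℝ := fun a u ↦ (1 - cos (a * u)) * u ^ (-1 - α)
  have hf : ∀ a, IntegrableOn (f a) (Ioi 0) := integrableOn_one_sub_cos_mul_rpow hα hα2
  have hrepr : ∀ i j, (|t i| ^ α + |t j| ^ α - |t i - t j| ^ α) *
      ∫ u in Ioi 0, (1 - cos u) * u ^ (-1 - α) =
      ∫ u in Ioi 0, f (t i) u + f (t j) u - f (t i - t j) u := fun i j ↦ by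
    rw [integral_sub (f := fun u ↦ f (t i) u + f (t j) u) ((hf _).add (hf _)) (hf _),
      integral_add (hf _) (hf _)]
    simp only [f, integral_one_sub_cos_mul_rpow hα]
    ring
  rw [← mul_nonneg_iff_of_pos_right (integral_one_sub_cos_mul_rpow_pos hα hα2), Finset.sum_mul]
  simp_rw [Finset.sum_mul, mul_assoc (c _ * c _), hrepr]
  refine sum_sum_mul_integral_nonneg (k := fun i j u ↦ f (t i) u + f (t j) u - f (t i - t j) u)
    (fun i j ↦ ((hf _).add (hf _)).sub (hf _)) c ?_
  filter_upwards [ae_restrict_mem measurableSet_Ioi] with u hu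
  have hfactor : ∑ i, ∑ j, c i * c j * (f (t i) u + f (t j) u - f (t i - t j) u) =
      (∑ i, ∑ j, c i * c j * ((1 - cos (t i * u)) + (1 - cos (t j * u))
        - (1 - cos (t i * u - t j * u)))) * u ^ (-1 - α) := by
    simp_rw [Finset.sum_mul]
    exact Finset.sum_congr rfl fun i _ ↦ Finset.sum_congr rfl fun j _ ↦ by
      simp only [f, sub_mul (t i)]; ring
  rw [hfactor]
  exact mul_nonneg (sum_sum_mul_one_sub_cos_nonneg (fun i ↦ t i * u) c)
    (rpow_nonneg (le_of_lt hu) _)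

lemma sum_sum_mul_abs_rpow_kernel_nonneg {ι : Type*} [Fintype ι] {α : ℝ} (hα : 0 < α)
    (hα2 : α ≤ 2) (t c : ι → ℝ) :
    0 ≤ ∑ i, ∑ j, c i * c j * (|t i| ^ α + |t j| ^ α - |t i - t j| ^ α) := by
  rcases hα2.lt_or_eq with hlt | rfl
  · exact sum_sum_mul_abs_rpow_kernel_nonneg_of_lt_two hα hlt t c
  have hsq : ∑ i, ∑ j, c i * c j * (|t i| ^ (2 : ℝ) + |t j| ^ (2 : ℝ) - |t i - t j| ^ (2 : ℝ)) =
      2 * (∑ i, c i * t i) ^ 2 := by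
    simp_rw [rpow_two, sq_abs, sq, Finset.sum_mul_sum, Finset.mul_sum]
    exact Finset.sum_congr rfl fun i _ ↦ Finset.sum_congr rfl fun j _ ↦ by ring
  rw [hsq]
  positivity

/-- The fractional Brownian motion covariance kernel
`cov_H(t,s) = ½(t^{2H} + s^{2H} − |t−s|^{2H})` is positive semidefinite on `[0,∞) × [0,∞)`
for every Hurst parameter `H ∈ (0,1]`. -/
theorem fbm_covariance_posSemidef (H : ℝ) (hH : H ∈ Set.Ioc (0 : ℝ) 1)
    (n : ℕ) (t : Fin n → ℝ) (ht : ∀ i, 0 ≤ t i) (c : Fin n → ℝ) :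
    0 ≤ ∑ i, ∑ j, c i * c j *
      ((1 : ℝ) / 2 * (t i ^ (2 * H) + t j ^ (2 * H) - |t i - t j| ^ (2 * H))) := by
  have hkernel := sum_sum_mul_abs_rpow_kernel_nonneg (by linarith [hH.1] : 0 < 2 * H)
    (by linarith [hH.2]) t c
  simp_rw [abs_of_nonneg (ht _)] at hkernel
  calc 0 ≤ 1 / 2 * ∑ i, ∑ j, c i * c j * (t i ^ (2 * H) + t j ^ (2 * H) - |t i - t j| ^ (2 * H)) :=
        by positivity
    _ = _ := by
      simp_rw [Finset.mul_sum]
      exact Finset.sum_congr rfl fun i _ ↦ Finset.sum_congr rfl fun j _ ↦ by ring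
end

section
/- For every H ∈ (0,1), every n ∈ ℕ and all pairwise distinct positive times 0 < t_1 < t_2 < … < t_n, the n × n matrix with entries M_{ij} = ½(t_i^{2H} + t_j^{2H} − |t_i − t_j|^{2H}) is positive definite; equivalently, if c_1,…,c_n ∈ ℝ satisfy Σ_{i,j} c_i c_j · ½(t_i^{2H} + t_j^{2H} − |t_i − t_j|^{2H}) = 0, then c_1 = … = c_n = 0. -/
/-!
For `0 < α < 2` one has `|a| ^ α = C⁻¹ ∫₀^∞ (1 - cos (a x)) x^(-1-α) dx` with `C > 0`, and the
identity `(1 - cos a)(1 - cos b) + sin a sin b = (1 - cos a) + (1 - cos b) - (1 - cos (a - b))`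
turns the quadratic form `∑ cᵢ cⱼ (|tᵢ|^α + |tⱼ|^α - |tᵢ - tⱼ|^α)` into
`C⁻¹ ∫₀^∞ ((∑ cᵢ (1 - cos (tᵢ x)))² + (∑ cᵢ sin (tᵢ x))²) x^(-1-α) dx ≥ 0`.
If it vanishes, the continuous integrand vanishes, i.e. `∑ cᵢ (e^{i tᵢ x} - 1) = 0` for all `x`,
and Dedekind's independence of the characters `x ↦ e^{i s x}` with the distinct frequencies
`0, t₁, …, tₙ` forces `c = 0`.
-/

open Real MeasureTheory Set Filter Finset
open scoped Matrix

theorem dotProduct_mulVec_eq_sum_sum {ι : Type*} [Fintype ι] (M : Matrix ι ι ℝ) (c : ι → ℝ) :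
    c ⬝ᵥ (M *ᵥ c) = ∑ i, ∑ j, c i * c j * M i j := by
  simp only [dotProduct, Matrix.mulVec, mul_sum]
  exact sum_congr rfl fun i _ => sum_congr rfl fun j _ => by ring

theorem Matrix.PosDef.eq_zero_of_sum_sum_eq_zero {ι : Type*} [Fintype ι] {M : Matrix ι ι ℝ}
    (hM : M.PosDef) {c : ι → ℝ} (h : ∑ i, ∑ j, c i * c j * M i j = 0) : c = 0 := by
  by_contra hc
  have hpos := hM.dotProduct_mulVec_pos hc
  rw [star_trivial, dotProduct_mulVec_eq_sum_sum, h] at hpos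
  exact lt_irrefl _ hpos

theorem sq_sum_add_sq_sum {ι : Type*} [Fintype ι] (c u v : ι → ℝ) :
    (∑ i, c i * u i) ^ 2 + (∑ i, c i * v i) ^ 2
      = ∑ i, ∑ j, c i * c j * (u i * u j + v i * v j) := by
  simp only [sq, sum_mul_sum, ← sum_add_distrib]
  exact sum_congr rfl fun i _ => sum_congr rfl fun j _ => by ring

theorem eqOn_zero_of_setIntegral_eq_zero {X : Type*} [TopologicalSpace X] [MeasurableSpace X]
    [OpensMeasurableSpace X] {μ : Measure X} [μ.IsOpenPosMeasure] {f : X → ℝ} {s : Set X}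
    (hs : IsOpen s) (hf : ContinuousOn f s) (hfi : IntegrableOn f s μ)
    (hnn : ∀ x ∈ s, 0 ≤ f x) (h0 : ∫ x in s, f x ∂μ = 0) : EqOn f 0 s :=
  Measure.eqOn_open_of_ae_eq ((setIntegral_eq_zero_iff_of_nonneg_ae
    (ae_restrict_of_forall_mem hs.measurableSet hnn) hfi).1 h0) hs hf continuousOn_const

theorem continuousOn_mul_rpow_Ioi {g : ℝ → ℝ} (hg : Continuous g) (s : ℝ) :
    ContinuousOn (fun x => g x * x ^ s) (Ioi 0) :=
  hg.continuousOn.mul (continuousOn_id.rpow_const fun _ hx => Or.inl (ne_of_gt hx))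

theorem integrableOn_one_sub_cos_mul_mul_rpow {α : ℝ} (hα0 : 0 < α) (hα2 : α < 2) (t : ℝ) :
    IntegrableOn (fun x => (1 - cos (t * x)) * x ^ (-1 - α)) (Ioi 0) := by
  have hcont := continuousOn_mul_rpow_Ioi (by fun_prop : Continuous fun x => 1 - cos (t * x))
    (-1 - α)
  have hnorm : ∀ x ∈ Ioi (0 : ℝ),
      ‖(1 - cos (t * x)) * x ^ (-1 - α)‖ = (1 - cos (t * x)) * x ^ (-1 - α) := fun x hx =>
    Real.norm_of_nonneg (mul_nonneg (by linarith [cos_le_one (t * x)]) (rpow_nonneg hx.le _))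
  have hnear : IntegrableOn (fun x => (1 - cos (t * x)) * x ^ (-1 - α)) (Ioc 0 1) := by
    have hpow : IntegrableOn (fun x : ℝ => x ^ (1 - α)) (Ioc 0 1) :=
      (intervalIntegrable_iff_integrableOn_Ioc_of_le zero_le_one).1
        (intervalIntegral.intervalIntegrable_rpow' (by linarith))
    refine Integrable.mono' (hpow.const_mul (t ^ 2 / 2))
      (hcont.mono Ioc_subset_Ioi_self |>.aestronglyMeasurable measurableSet_Ioc)
      ((ae_restrict_iff' measurableSet_Ioc).2 (Eventually.of_forall fun x hx => ?_))
    rw [hnorm x hx.1, show x ^ (1 - α) = x ^ 2 * x ^ (-1 - α) by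
      rw [← rpow_natCast, ← rpow_add hx.1]; norm_num; ring_nf]
    have hcos := one_sub_sq_div_two_le_cos (x := t * x)
    have hw := rpow_nonneg hx.1.le (-1 - α)
    nlinarith
  have hfar : IntegrableOn (fun x => (1 - cos (t * x)) * x ^ (-1 - α)) (Ioi 1) := by
    have hpow : IntegrableOn (fun x : ℝ => x ^ (-1 - α)) (Ioi 1) :=
      integrableOn_Ioi_rpow_of_lt (by linarith) one_pos
    refine Integrable.mono' (hpow.const_mul 2)
      (hcont.mono (Ioi_subset_Ioi zero_le_one) |>.aestronglyMeasurable measurableSet_Ioi)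
      ((ae_restrict_iff' measurableSet_Ioi).2 (Eventually.of_forall fun x hx => ?_))
    have hx0 : (0 : ℝ) < x := one_pos.trans hx
    rw [hnorm x hx0]
    exact mul_le_mul_of_nonneg_right (by linarith [neg_one_le_cos (t * x)]) (rpow_nonneg hx0.le _)
  rw [← Ioc_union_Ioi_eq_Ioi zero_le_one]
  exact hnear.union hfar

noncomputable def oneSubCosIntegral (α t : ℝ) : ℝ :=
  ∫ x in Ioi 0, (1 - cos (t * x)) * x ^ (-1 - α)

theorem oneSubCosIntegral_of_pos (α : ℝ) {t : ℝ} (ht : 0 < t) :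
    oneSubCosIntegral α t = t ^ α * oneSubCosIntegral α 1 := by
  have hscale : ∀ x ∈ Ioi (0 : ℝ), (1 - cos (t * x)) * x ^ (-1 - α)
      = t ^ (1 + α) * ((1 - cos (t * x)) * (t * x) ^ (-1 - α)) := fun x hx => by
    have h : t ^ (1 + α) * t ^ (-1 - α) = 1 := by rw [← rpow_add ht]; norm_num
    rw [mul_rpow ht.le (le_of_lt hx)]
    linear_combination (-(1 - cos (t * x)) * x ^ (-1 - α)) * h
  have hsubst := integral_comp_mul_left_Ioi (fun u => (1 - cos u) * u ^ (-1 - α)) 0 ht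
  simp only [mul_zero] at hsubst
  rw [oneSubCosIntegral, setIntegral_congr_fun measurableSet_Ioi hscale, integral_const_mul,
    hsubst, smul_eq_mul, oneSubCosIntegral, ← mul_assoc, ← rpow_neg_one, ← rpow_add ht]
  rw [add_neg_cancel_comm]
  simp only [one_mul]

theorem oneSubCosIntegral_eq {α : ℝ} (hα0 : 0 < α) (t : ℝ) :
    oneSubCosIntegral α t = |t| ^ α * oneSubCosIntegral α 1 := by
  rcases eq_or_ne t 0 with rfl | ht
  · simp [oneSubCosIntegral, zero_rpow hα0.ne']
  rw [← oneSubCosIntegral_of_pos α (abs_pos.2 ht)]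
  rcases abs_choice t with h | h <;> simp [oneSubCosIntegral, h]

theorem oneSubCosIntegral_one_pos {α : ℝ} (hα0 : 0 < α) (hα2 : α < 2) :
    0 < oneSubCosIntegral α 1 := by
  have hnn : ∀ x ∈ Ioi (0 : ℝ), 0 ≤ (1 - cos (1 * x)) * x ^ (-1 - α) := fun x hx =>
    mul_nonneg (by linarith [cos_le_one (1 * x)]) (rpow_nonneg (le_of_lt hx) _)
  refine (setIntegral_nonneg measurableSet_Ioi hnn).lt_of_ne fun h => ?_
  have hπ := eqOn_zero_of_setIntegral_eq_zero isOpen_Ioi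
    (continuousOn_mul_rpow_Ioi (by fun_prop : Continuous fun x => 1 - cos (1 * x)) (-1 - α))
    (integrableOn_one_sub_cos_mul_mul_rpow hα0 hα2 1) hnn h.symm (mem_Ioi.2 pi_pos)
  simp only [one_mul, cos_pi, Pi.zero_apply] at hπ
  linarith [rpow_pos_of_pos pi_pos (-1 - α)]

theorem cos_kernel_mul_rpow_eq (α a b x : ℝ) :
    ((1 - cos (a * x)) * (1 - cos (b * x)) + sin (a * x) * sin (b * x)) * x ^ (-1 - α)
      = (1 - cos (a * x)) * x ^ (-1 - α) + (1 - cos (b * x)) * x ^ (-1 - α)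
        - (1 - cos ((a - b) * x)) * x ^ (-1 - α) := by
  rw [sub_mul a b, cos_sub]; ring

theorem integrableOn_cos_kernel_mul_rpow {α : ℝ} (hα0 : 0 < α) (hα2 : α < 2) (a b : ℝ) :
    IntegrableOn (fun x => ((1 - cos (a * x)) * (1 - cos (b * x)) + sin (a * x) * sin (b * x))
      * x ^ (-1 - α)) (Ioi 0) :=
  (((integrableOn_one_sub_cos_mul_mul_rpow hα0 hα2 a).add
    (integrableOn_one_sub_cos_mul_mul_rpow hα0 hα2 b)).sub
    (integrableOn_one_sub_cos_mul_mul_rpow hα0 hα2 (a - b))).congr_fun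
    (fun x _ => (cos_kernel_mul_rpow_eq α a b x).symm) measurableSet_Ioi

theorem integral_cos_kernel_mul_rpow {α : ℝ} (hα0 : 0 < α) (hα2 : α < 2) (a b : ℝ) :
    ∫ x in Ioi 0, ((1 - cos (a * x)) * (1 - cos (b * x)) + sin (a * x) * sin (b * x))
      * x ^ (-1 - α) = (|a| ^ α + |b| ^ α - |a - b| ^ α) * oneSubCosIntegral α 1 := by
  have hI := integrableOn_one_sub_cos_mul_mul_rpow hα0 hα2
  rw [setIntegral_congr_fun measurableSet_Ioi fun x _ => cos_kernel_mul_rpow_eq α a b x,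
    integral_sub (by exact (hI a).add (hI b)) (hI (a - b)), integral_add (hI a) (hI b)]
  rw [← oneSubCosIntegral, ← oneSubCosIntegral, ← oneSubCosIntegral, oneSubCosIntegral_eq hα0 a,
    oneSubCosIntegral_eq hα0 b, oneSubCosIntegral_eq hα0 (a - b)]
  ring

theorem sq_sum_add_sq_sum_mul_rpow_eq {ι : Type*} [Fintype ι] (α : ℝ) (c t : ι → ℝ) (x : ℝ) :
    ((∑ i, c i * (1 - cos (t i * x))) ^ 2 + (∑ i, c i * sin (t i * x)) ^ 2) * x ^ (-1 - α)
      = ∑ i, ∑ j, c i * c j * (((1 - cos (t i * x)) * (1 - cos (t j * x))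
          + sin (t i * x) * sin (t j * x)) * x ^ (-1 - α)) := by
  simp only [sq_sum_add_sq_sum, sum_mul, mul_assoc]

theorem integrableOn_sq_sum_add_sq_sum_mul_rpow {ι : Type*} [Fintype ι] {α : ℝ} (hα0 : 0 < α)
    (hα2 : α < 2) (c t : ι → ℝ) :
    IntegrableOn (fun x => ((∑ i, c i * (1 - cos (t i * x))) ^ 2
      + (∑ i, c i * sin (t i * x)) ^ 2) * x ^ (-1 - α)) (Ioi 0) := by
  simp only [sq_sum_add_sq_sum_mul_rpow_eq]
  exact integrable_finsetSum _ fun i _ => integrable_finsetSum _ fun j _ =>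
    (integrableOn_cos_kernel_mul_rpow hα0 hα2 (t i) (t j)).const_mul _

theorem integral_sq_sum_add_sq_sum_mul_rpow {ι : Type*} [Fintype ι] {α : ℝ} (hα0 : 0 < α)
    (hα2 : α < 2) (c t : ι → ℝ) :
    ∫ x in Ioi 0, ((∑ i, c i * (1 - cos (t i * x))) ^ 2
      + (∑ i, c i * sin (t i * x)) ^ 2) * x ^ (-1 - α)
      = (∑ i, ∑ j, c i * c j * (|t i| ^ α + |t j| ^ α - |t i - t j| ^ α))
        * oneSubCosIntegral α 1 := by
  have hK := integrableOn_cos_kernel_mul_rpow hα0 hα2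
  simp only [sq_sum_add_sq_sum_mul_rpow_eq, sum_mul]
  rw [integral_finsetSum _ fun i _ => integrable_finsetSum _ fun j _ => (hK _ _).const_mul _]
  refine sum_congr rfl fun i _ => ?_
  rw [integral_finsetSum _ fun j _ => (hK _ _).const_mul _]
  refine sum_congr rfl fun j _ => ?_
  rw [integral_const_mul, integral_cos_kernel_mul_rpow hα0 hα2]
  ring

theorem sum_one_sub_cos_eq_zero_and_sum_sin_eq_zero {ι : Type*} [Fintype ι] {α : ℝ}
    (hα0 : 0 < α) (hα2 : α < 2) {c t : ι → ℝ}
    (h : ∑ i, ∑ j, c i * c j * (|t i| ^ α + |t j| ^ α - |t i - t j| ^ α) = 0)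
    {x : ℝ} (hx : 0 < x) :
    ∑ i, c i * (1 - cos (t i * x)) = 0 ∧ ∑ i, c i * sin (t i * x) = 0 := by
  have hF := eqOn_zero_of_setIntegral_eq_zero isOpen_Ioi
    (continuousOn_mul_rpow_Ioi (by fun_prop : Continuous fun x =>
      (∑ i, c i * (1 - cos (t i * x))) ^ 2 + (∑ i, c i * sin (t i * x)) ^ 2) (-1 - α))
    (integrableOn_sq_sum_add_sq_sum_mul_rpow hα0 hα2 c t)
    (fun x hx => mul_nonneg (by positivity) (rpow_nonneg (le_of_lt hx) _))
    (by rw [integral_sq_sum_add_sq_sum_mul_rpow hα0 hα2, h, zero_mul]) hx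
  simp only [Pi.zero_apply, mul_eq_zero, (rpow_pos_of_pos hx _).ne', or_false] at hF
  constructor <;> nlinarith [sq_nonneg (∑ i, c i * (1 - cos (t i * x))),
    sq_nonneg (∑ i, c i * sin (t i * x))]

noncomputable def expMulIChar (s : ℝ) : Multiplicative ℝ →* ℂ where
  toFun x := Complex.exp (↑(s * x.toAdd) * Complex.I)
  map_one' := by simp
  map_mul' x y := by simp [mul_add, add_mul, Complex.exp_add]

theorem expMulIChar_injective : Function.Injective expMulIChar := by
  intro s s' h
  by_contra hne
  -- At `θ = π / (s - s')` the two characters differ by the factor `e^{iπ} = -1`.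
  have hθ : (s - s') * (π / (s - s')) = π := mul_div_cancel₀ _ (sub_ne_zero.2 hne)
  set θ := π / (s - s')
  obtain ⟨m, hm⟩ := Complex.exp_eq_exp_iff_exists_int.1
    (DFunLike.congr_fun h (Multiplicative.ofAdd θ))
  have him := congrArg Complex.im hm
  simp only [toAdd_ofAdd, Complex.ofReal_mul, Complex.mul_im, Complex.mul_re, Complex.ofReal_re,
    Complex.ofReal_im, mul_zero, sub_zero, Complex.I_im, mul_one, zero_mul, add_zero, Complex.I_re,
    Complex.add_im, Complex.intCast_re, Complex.re_ofNat, Complex.im_ofNat, Complex.intCast_im,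
    sub_self] at him
  have hreal : (1 : ℝ) = 2 * m := by nlinarith [pi_pos]
  have hint : (1 : ℤ) = 2 * m := by exact_mod_cast hreal
  omega

theorem eq_zero_of_sum_mul_exp_eq_sum {ι : Type*} [Fintype ι] {t : ι → ℝ}
    (ht : Function.Injective t) (ht0 : ∀ i, t i ≠ 0) {c : ι → ℂ}
    (h : ∀ x : ℝ, ∑ i, c i * Complex.exp (↑(t i * x) * Complex.I) = ∑ i, c i) : c = 0 := by
  -- The frequency `0` (index `none`) is the trivial character, with coefficient `-∑ i, c i`.
  set s : Option ι → ℝ := fun o => o.elim 0 t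
  have hs : Function.Injective s := by
    rintro (_ | i) (_ | j) hij
    · rfl
    · exact absurd hij.symm (ht0 j)
    · exact absurd hij (ht0 i)
    · exact congrArg some (ht hij)
  have hli := Fintype.linearIndependent_iff.1 <|
    (linearIndependent_monoidHom (Multiplicative ℝ) ℂ).comp (fun o => expMulIChar (s o))
      (expMulIChar_injective.comp hs)
  funext i
  refine hli (fun o => o.elim (-∑ i, c i) c) ?_ (some i)
  funext x
  have hx := h x.toAdd
  push_cast at hx
  simp [Fintype.sum_option, s, expMulIChar, hx]

theorem eq_zero_of_sum_one_sub_cos_eq_zero_of_sum_sin_eq_zero {ι : Type*} [Fintype ι]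
    {t : ι → ℝ} (ht : Function.Injective t) (ht0 : ∀ i, t i ≠ 0) {c : ι → ℝ}
    (h : ∀ x, 0 < x → ∑ i, c i * (1 - cos (t i * x)) = 0 ∧ ∑ i, c i * sin (t i * x) = 0) :
    c = 0 := by
  have hall : ∀ x, ∑ i, c i * (1 - cos (t i * x)) = 0 ∧ ∑ i, c i * sin (t i * x) = 0 := by
    intro x
    rcases lt_trichotomy x 0 with hx | rfl | hx
    · simpa [mul_neg, cos_neg, sin_neg, sum_neg_distrib] using h (-x) (neg_pos.2 hx)
    · simp
    · exact h x hx
  have hc : (fun i => (c i : ℂ)) = 0 := eq_zero_of_sum_mul_exp_eq_sum ht ht0 fun x => by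
    obtain ⟨hcos, hsin⟩ := hall x
    simp only [mul_sub, mul_one, sum_sub_distrib, sub_eq_zero] at hcos
    simp only [Complex.exp_mul_I, ← Complex.ofReal_cos, ← Complex.ofReal_sin, mul_add,
      sum_add_distrib, ← mul_assoc, ← sum_mul]
    norm_cast
    rw [hcos, hsin]
    simp
  funext i
  simpa using congrFun hc i

theorem posDef_abs_rpow_kernel {ι : Type*} [Fintype ι] {α : ℝ} (hα0 : 0 < α) (hα2 : α < 2)
    {t : ι → ℝ} (ht : Function.Injective t) (ht0 : ∀ i, t i ≠ 0) :
    (Matrix.of fun i j => |t i| ^ α + |t j| ^ α - |t i - t j| ^ α).PosDef := by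
  refine Matrix.PosDef.of_dotProduct_mulVec_pos ?_ fun c hc => ?_
  · ext i j
    simp only [Matrix.conjTranspose_apply, Matrix.of_apply, star_trivial, abs_sub_comm (t j)]
    ring
  rw [star_trivial, dotProduct_mulVec_eq_sum_sum]
  simp only [Matrix.of_apply]
  have hnonneg : 0 ≤ ∑ i, ∑ j, c i * c j * (|t i| ^ α + |t j| ^ α - |t i - t j| ^ α) := by
    refine (mul_nonneg_iff_of_pos_right (oneSubCosIntegral_one_pos hα0 hα2)).1 ?_
    rw [← integral_sq_sum_add_sq_sum_mul_rpow hα0 hα2]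
    exact setIntegral_nonneg measurableSet_Ioi fun x hx =>
      mul_nonneg (by positivity) (rpow_nonneg (le_of_lt hx) _)
  exact hnonneg.lt_of_ne fun h => hc <|
    eq_zero_of_sum_one_sub_cos_eq_zero_of_sum_sin_eq_zero ht ht0 fun x hx =>
      sum_one_sub_cos_eq_zero_and_sum_sin_eq_zero hα0 hα2 h.symm hx

/-- For `H ∈ (0,1)` and pairwise distinct positive times `0 < t_1 < … < t_n`, the Gram
matrix of the fractional Brownian motion covariance kernel
`cov_H(t,s) = ½(t^{2H} + s^{2H} − |t−s|^{2H})` is positive definite. -/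
theorem fbm_covariance_posDef (H : ℝ) (hH : H ∈ Set.Ioo (0 : ℝ) 1)
    (n : ℕ) (t : Fin n → ℝ) (ht_pos : ∀ i, 0 < t i)
    (ht_mono : ∀ i j : Fin n, i < j → t i < t j) :
    (Matrix.of fun i j : Fin n =>
      (1 : ℝ) / 2 * (t i ^ (2 * H) + t j ^ (2 * H) - |t i - t j| ^ (2 * H))).PosDef ∧
    ∀ c : Fin n → ℝ,
      (∑ i, ∑ j, c i * c j *
        ((1 : ℝ) / 2 * (t i ^ (2 * H) + t j ^ (2 * H) - |t i - t j| ^ (2 * H))) = 0) →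
      ∀ i, c i = 0 := by
  have hM : (Matrix.of fun i j : Fin n =>
      (1 : ℝ) / 2 * (t i ^ (2 * H) + t j ^ (2 * H) - |t i - t j| ^ (2 * H)))
      = (1 / 2 : ℝ) • Matrix.of fun i j =>
        |t i| ^ (2 * H) + |t j| ^ (2 * H) - |t i - t j| ^ (2 * H) := by
    ext i j
    simp [abs_of_pos (ht_pos i), abs_of_pos (ht_pos j)]
  have hpos : (Matrix.of fun i j : Fin n =>
      (1 : ℝ) / 2 * (t i ^ (2 * H) + t j ^ (2 * H) - |t i - t j| ^ (2 * H))).PosDef := by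
    rw [hM]
    exact (posDef_abs_rpow_kernel (by linarith [hH.1]) (by linarith [hH.2])
      (StrictMono.injective fun i j => ht_mono i j) fun i => (ht_pos i).ne').smul (by norm_num)
  exact ⟨hpos, fun c hc => congrFun (hpos.eq_zero_of_sum_sum_eq_zero hc)⟩
end
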